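/- arXiv:2305.05675 — 4 statements merged into one kernel-verified Lean document; each statement's English description precedes it below -/
import Mathlib

section
/- Deterministic variance recursion: Let f : ℝ^d → ℝ have L-Lipschitz gradient, let x, x' ∈ ℝ^d, m' ∈ ℝ^d, β ∈ [0,1), g ∈ ℝ^d, and set m = β m' + (1-β) g. Then ‖β(m' - ∇f(x')) + β(∇f(x') - ∇f(x)) + (1-β)(g - ∇f(x))‖² ≤ β‖m' - ∇f(x')‖² + (β²/(1-β))L²‖x - x'‖² + (1-β)²‖g - ∇f(x)‖² + 2β(1-β)⟨m' - ∇f(x), g - ∇f(x)⟩. -/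
open scoped RealInnerProductSpace

theorem variance_recursion_core (d : ℕ) (f : EuclideanSpace ℝ (Fin d) → ℝ) (L : ℝ)
    (hf : Differentiable ℝ f)
    (hL : ∀ x y : EuclideanSpace ℝ (Fin d), ‖gradient f x - gradient f y‖ ≤ L * ‖x - y‖)
    (x x' m' g : EuclideanSpace ℝ (Fin d)) (β : ℝ) (hβ0 : 0 ≤ β) (hβ1 : β < 1) :
    ‖β • (m' - gradient f x') + β • (gradient f x' - gradient f x)
        + (1 - β) • (g - gradient f x)‖ ^ 2 ≤
      β * ‖m' - gradient f x'‖ ^ 2 + β ^ 2 / (1 - β) * L ^ 2 * ‖x - x'‖ ^ 2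
        + (1 - β) ^ 2 * ‖g - gradient f x‖ ^ 2
        + 2 * β * (1 - β) * ⟪m' - gradient f x, g - gradient f x⟫ := by
  have hδ : (0:ℝ) < 1 - β := by linarith
  set a := m' - gradient f x' with ha
  set b := gradient f x' - gradient f x with hb
  set c := g - gradient f x with hc
  have hab : m' - gradient f x = a + b := by rw [ha, hb]; abel
  have key : ∀ (u v : EuclideanSpace ℝ (Fin d)) (s t : ℝ),
      ‖s • u + t • v‖ ^ 2 = s ^ 2 * ‖u‖ ^ 2 + 2 * s * t * ⟪u, v⟫ + t ^ 2 * ‖v‖ ^ 2 := by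
    intro u v s t
    rw [@norm_add_sq_real, norm_smul, norm_smul, real_inner_smul_left,
      real_inner_smul_right, Real.norm_eq_abs, Real.norm_eq_abs, mul_pow, mul_pow,
      sq_abs, sq_abs]
    ring
  have hL' : ‖b‖ ≤ L * ‖x - x'‖ := by
    have := hL x' x
    rwa [norm_sub_rev x'] at this
  have hb2 : ‖b‖ ^ 2 ≤ L ^ 2 * ‖x - x'‖ ^ 2 := by
    have := pow_le_pow_left₀ (norm_nonneg b) hL' 2
    calc ‖b‖ ^ 2 ≤ (L * ‖x - x'‖) ^ 2 := this
    _ = L ^ 2 * ‖x - x'‖ ^ 2 := by ring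
  have h0 : 0 ≤ ‖(1 - β) • a + (-β) • b‖ ^ 2 := by positivity
  rw [key a b (1 - β) (-β)] at h0
  have hexp : ‖a + b‖ ^ 2 = ‖a‖ ^ 2 + 2 * ⟪a, b⟫ + ‖b‖ ^ 2 := norm_add_sq_real a b
  have key2 : β ^ 2 * (1 - β) * ‖a + b‖ ^ 2
      ≤ β * (1 - β) * ‖a‖ ^ 2 + β ^ 2 * (L ^ 2 * ‖x - x'‖ ^ 2) := by
    rw [hexp]
    nlinarith [mul_nonneg hβ0 h0, mul_le_mul_of_nonneg_left hb2 (sq_nonneg β),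
      sq_nonneg (‖b‖), norm_nonneg b, sq_nonneg β]
  have main : β ^ 2 * ‖a + b‖ ^ 2 ≤ β * ‖a‖ ^ 2 + β ^ 2 / (1 - β) * L ^ 2 * ‖x - x'‖ ^ 2 := by
    have heq : β ^ 2 / (1 - β) * L ^ 2 * ‖x - x'‖ ^ 2
        = β ^ 2 * (L ^ 2 * ‖x - x'‖ ^ 2) / (1 - β) := by ring
    rw [heq, ← sub_le_iff_le_add', le_div_iff₀ hδ]
    nlinarith [key2]
  have hLHS : β • a + β • b + (1 - β) • c = β • (a + b) + (1 - β) • c := by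
    rw [smul_add]
  rw [hLHS, key (a + b) c β (1 - β), hab]
  linarith [main]
end

section
/- Equivalence of the two unified momentum forms: let β ∈ [0,1), λ ≥ 0 with λ̃ := (1-β)λ ∈ [0,1], η > 0, and (g_t) a sequence in ℝ^d. Define SUM₂ by m_t = β m_{t-1} + (1-β) g_t, m̄_t = m_t - λ̃(m_t - g_t), x_{t+1} = x_t - η m̄_t. Then for t ≥ 2 the iterates satisfy the two-step recursion x_{t+1} = x_t - η(1-β)λ g_t - η(1-β)(1 - (1-β)λ) g_t + β(x_t - x_{t-1} + η(1-β)λ g_{t-1}), which is the recursion of SUM₁ (m_t = μ m_{t-1} - η_t g_t, x_{t+1} = x_t - λ η_t g_t + (1-λ̃) m_t) with η_t = η(1-β) and μ = β. -/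
theorem sum_equivalence (d : ℕ) (η β lam : ℝ) (hη : 0 < η) (hβ0 : 0 ≤ β) (hβ1 : β < 1)
    (hlam : 0 ≤ lam) (hlamt : (1 - β) * lam ≤ 1)
    (g m mbar x : ℕ → EuclideanSpace ℝ (Fin d))
    (hm : ∀ t ≥ 1, m t = β • m (t - 1) + (1 - β) • g t)
    (hmbar : ∀ t ≥ 1, mbar t = m t - ((1 - β) * lam) • (m t - g t))
    (hx : ∀ t ≥ 1, x (t + 1) = x t - η • mbar t) :
    ∀ t ≥ 2,
      x (t + 1) = x t - (η * (1 - β) * lam) • g t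
          - (η * (1 - β) * (1 - (1 - β) * lam)) • g t
          + β • (x t - x (t - 1) + (η * (1 - β) * lam) • g (t - 1)) := by
  intro t ht
  obtain ⟨s, rfl⟩ : ∃ s, t = s + 2 := ⟨t - 2, by omega⟩
  have e1 : s + 2 - 1 = s + 1 := by omega
  have hmt := hm (s + 2) (by omega)
  have hmt1 := hm (s + 1) (by omega)
  have hmbart := hmbar (s + 2) (by omega)
  have hmbart1 := hmbar (s + 1) (by omega)
  have hxt := hx (s + 2) (by omega)
  have hxt1 := hx (s + 1) (by omega)
  simp only [e1] at hmt hmbart hxt ⊢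
  rw [hxt, hxt1, hmbart, hmbart1, hmt, hmt1]
  module
end

section
/- Descent-lemma bound for the UAdam step: let f : ℝ^d → ℝ be differentiable with L-Lipschitz gradient, λ̃ ∈ [0,1], and let η_t ∈ ℝ^d be a coordinatewise positive vector, g, m ∈ ℝ^d, and x_{+} = x - η_t ⊙ (m - λ̃(m - g)) (⊙ denotes coordinatewise product). Then f(x_{+}) ≤ f(x) + (λ̃/2)‖√η_t ⊙ (g - ∇f(x))‖² + ((1-λ̃)/2)‖√η_t ⊙ (m - ∇f(x))‖² - (1/2)‖√η_t ⊙ ∇f(x)‖² - (λ̃/2)‖√η_t ⊙ g‖² + (λ̃ L/2)‖η_t ⊙ g‖² - ((1-λ̃)/2)‖√η_t ⊙ m‖² + ((1-λ̃) L/2)‖η_t ⊙ m‖². -/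
/-!
The descent lemma `f y ≤ f x + ⟪∇f x, y - x⟫ + L/2 ‖y - x‖²` holds because
`t ↦ f (x + t v) - t ⟪∇f x, v⟫ - L t²/2 ‖v‖²` has nonpositive derivative for `t ≥ 0`.
For the UAdam step, `x₊ - x = -(λ η ⊙ g + (1 - λ) η ⊙ m)`. Writing `⟪∇f x, η ⊙ u⟫` as
`⟪√η ⊙ ∇f x, √η ⊙ u⟫` and polarizing gives the terms in `√η`, and convexity of `‖·‖²`
bounds `‖x₊ - x‖²` by `λ ‖η ⊙ g‖² + (1 - λ) ‖η ⊙ m‖²`; multiplying by `L` needs `L ≥ 0`, which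
the Lipschitz bound forces in positive dimension.
-/

noncomputable section

/-- Coordinatewise (Hadamard) product on `EuclideanSpace ℝ (Fin d)`. -/
def had {d : ℕ} (η : Fin d → ℝ) (v : EuclideanSpace ℝ (Fin d)) :
    EuclideanSpace ℝ (Fin d) := WithLp.toLp 2 (fun i => η i * v i)

open Set
open scoped Gradient RealInnerProductSpace

theorem nonneg_of_norm_sub_le_mul_norm_sub {E F : Type*} [NormedAddCommGroup E] [Nontrivial E]
    [SeminormedAddCommGroup F] {φ : E → F} {L : ℝ} (hL : ∀ x y, ‖φ x - φ y‖ ≤ L * ‖x - y‖) :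
    0 ≤ L := by
  obtain ⟨x, hx⟩ := exists_ne (0 : E)
  have := (norm_nonneg _).trans (hL x 0)
  exact nonneg_of_mul_nonneg_left this (by simpa using norm_pos_iff.2 hx)

theorem norm_smul_add_smul_sq_le {E : Type*} [SeminormedAddCommGroup E] [NormedSpace ℝ E]
    {a b : ℝ} (x y : E) (ha : 0 ≤ a) (hb : 0 ≤ b) (hab : a + b = 1) :
    ‖a • x + b • y‖ ^ 2 ≤ a * ‖x‖ ^ 2 + b * ‖y‖ ^ 2 :=
  ((convexOn_norm convex_univ).pow (fun _ _ ↦ norm_nonneg _) 2).2 trivial trivial ha hb hab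

section Descent

variable {E : Type*} [NormedAddCommGroup E] [InnerProductSpace ℝ E] [CompleteSpace E]
  {f : E → ℝ} {L : ℝ}

theorem inner_gradient_sub_le (hL : ∀ x y, ‖∇ f x - ∇ f y‖ ≤ L * ‖x - y‖) (x v : E) {t : ℝ}
    (ht : 0 ≤ t) : ⟪∇ f (x + t • v) - ∇ f x, v⟫ ≤ L * t * ‖v‖ ^ 2 :=
  calc ⟪∇ f (x + t • v) - ∇ f x, v⟫ ≤ ‖∇ f (x + t • v) - ∇ f x‖ * ‖v‖ := real_inner_le_norm _ _
    _ ≤ L * ‖t • v‖ * ‖v‖ := by gcongr; simpa using hL (x + t • v) x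
    _ = L * t * ‖v‖ ^ 2 := by rw [norm_smul, Real.norm_of_nonneg ht]; ring

theorem descent_lemma (hf : Differentiable ℝ f) (hL : ∀ x y, ‖∇ f x - ∇ f y‖ ≤ L * ‖x - y‖)
    (x y : E) : f y ≤ f x + ⟪∇ f x, y - x⟫ + L / 2 * ‖y - x‖ ^ 2 := by
  set v := y - x
  let φ : ℝ → ℝ := fun t ↦ f (x + t • v) - t * ⟪∇ f x, v⟫ - L / 2 * t ^ 2 * ‖v‖ ^ 2
  have hφ : ∀ t, HasDerivAt φ (⟪∇ f (x + t • v) - ∇ f x, v⟫ - L * t * ‖v‖ ^ 2) t := by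
    intro t
    have hline : HasDerivAt (fun t : ℝ ↦ x + t • v) v t := by
      simpa using ((hasDerivAt_id t).smul_const v).const_add x
    have hcomp := (hf (x + t • v)).hasGradientAt.hasFDerivAt.comp_hasDerivAt t hline
    refine ((hcomp.sub ((hasDerivAt_id t).mul_const ⟪∇ f x, v⟫)).sub
      (((hasDerivAt_pow 2 t).const_mul (L / 2)).mul_const (‖v‖ ^ 2))).congr_deriv ?_
    simp only [InnerProductSpace.toDual_apply_apply, inner_sub_left]
    ring
  have hanti : AntitoneOn φ (Ici 0) := by
    refine antitoneOn_of_hasDerivWithinAt_nonpos (convex_Ici 0)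
      (fun t _ ↦ (hφ t).continuousAt.continuousWithinAt) (fun t _ ↦ (hφ t).hasDerivWithinAt) ?_
    rw [interior_Ici]
    exact fun t ht ↦ sub_nonpos.2 (inner_gradient_sub_le hL x v ht.le)
  have hφ10 := hanti self_mem_Ici (mem_Ici.2 zero_le_one) zero_le_one
  simp only [φ, one_smul, zero_smul, add_zero, v, add_sub_cancel] at hφ10
  linarith

end Descent

section Hadamard

variable {d : ℕ}

theorem had_add (η : Fin d → ℝ) (v w : EuclideanSpace ℝ (Fin d)) :
    had η (v + w) = had η v + had η w := by
  ext i; simp [had, mul_add]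

theorem had_sub (η : Fin d → ℝ) (v w : EuclideanSpace ℝ (Fin d)) :
    had η (v - w) = had η v - had η w := by
  ext i; simp [had, mul_sub]

theorem had_smul (η : Fin d → ℝ) (c : ℝ) (v : EuclideanSpace ℝ (Fin d)) :
    had η (c • v) = c • had η v := by
  ext i; simp [had, mul_left_comm]

theorem had_had (η μ : Fin d → ℝ) (v : EuclideanSpace ℝ (Fin d)) :
    had η (had μ v) = had (η * μ) v := by
  ext i; simp [had, mul_assoc]

theorem inner_had_left (η : Fin d → ℝ) (v w : EuclideanSpace ℝ (Fin d)) :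
    ⟪had η v, w⟫ = ⟪v, had η w⟫ := by
  simp only [had, PiLp.inner_apply, RCLike.inner_apply, conj_trivial]
  exact Finset.sum_congr rfl fun i _ ↦ by ring

theorem inner_had_sqrt {η : Fin d → ℝ} (hη : ∀ i, 0 ≤ η i) (v w : EuclideanSpace ℝ (Fin d)) :
    ⟪had (fun i ↦ √(η i)) v, had (fun i ↦ √(η i)) w⟫ = ⟪v, had η w⟫ := by
  rw [inner_had_left, had_had]
  congr 3
  ext i
  exact Real.mul_self_sqrt (hη i)

end Hadamard

theorem uadam_descent_lemma (d : ℕ) (f : EuclideanSpace ℝ (Fin d) → ℝ) (L : ℝ)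
    (hf : Differentiable ℝ f)
    (hL : ∀ x y : EuclideanSpace ℝ (Fin d), ‖gradient f x - gradient f y‖ ≤ L * ‖x - y‖)
    (lam : ℝ) (hlam0 : 0 ≤ lam) (hlam1 : lam ≤ 1)
    (ηt : Fin d → ℝ) (hη : ∀ i, 0 < ηt i)
    (g m x xp : EuclideanSpace ℝ (Fin d))
    (hxp : xp = x - had ηt (m - lam • (m - g))) :
    f xp ≤ f x
        + lam / 2 * ‖had (fun i => Real.sqrt (ηt i)) (g - gradient f x)‖ ^ 2
        + (1 - lam) / 2 * ‖had (fun i => Real.sqrt (ηt i)) (m - gradient f x)‖ ^ 2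
        - 1 / 2 * ‖had (fun i => Real.sqrt (ηt i)) (gradient f x)‖ ^ 2
        - lam / 2 * ‖had (fun i => Real.sqrt (ηt i)) g‖ ^ 2
        + lam * L / 2 * ‖had ηt g‖ ^ 2
        - (1 - lam) / 2 * ‖had (fun i => Real.sqrt (ηt i)) m‖ ^ 2
        + (1 - lam) * L / 2 * ‖had ηt m‖ ^ 2 := by
  rcases subsingleton_or_nontrivial (EuclideanSpace ℝ (Fin d)) with hE | hE
  · simp [norm_of_subsingleton, Subsingleton.elim xp x]
  have hL0 : 0 ≤ L := nonneg_of_norm_sub_le_mul_norm_sub hL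
  have hη0 : ∀ i, 0 ≤ ηt i := fun i ↦ (hη i).le
  have hstep : xp - x = -(lam • had ηt g + (1 - lam) • had ηt m) := by
    rw [hxp, show m - lam • (m - g) = lam • g + (1 - lam) • m by module, had_add, had_smul,
      had_smul, sub_sub_cancel_left]
  have hdescent := descent_lemma hf hL x xp
  rw [hstep, inner_neg_right, inner_add_right, inner_smul_right, inner_smul_right,
    ← inner_had_sqrt hη0, ← inner_had_sqrt hη0, norm_neg] at hdescent
  have hconvex := norm_smul_add_smul_sq_le (had ηt g) (had ηt m) hlam0 (sub_nonneg.2 hlam1)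
    (add_sub_cancel lam 1)
  rw [had_sub, had_sub, norm_sub_rev (had _ g), norm_sub_rev (had _ m), norm_sub_sq_real,
    norm_sub_sq_real]
  linarith [mul_le_mul_of_nonneg_left hconvex hL0]

end
end

section
/- Deterministic telescoping bound for UAdam (full-gradient case): let f : ℝ^d → ℝ be differentiable with L-Lipschitz gradient and bounded below by f*. Let β ∈ [0,1), λ̃ ∈ [0,1], and η > 0 with Lη ≤ 1/2. Define m_0 = 0, m_t = β m_{t-1} + (1-β)∇f(x_t), and x_{t+1} = x_t - η(m_t - λ̃(m_t - ∇f(x_t))). Then for every T ≥ 1, (η/2) Σ_{t=1}^T ‖∇f(x_t)‖² ≤ f(x_1) - f* + ((1-λ̃)η/2) Σ_{t=1}^T ‖m_t - ∇f(x_t)‖² - (η/4) Σ_{t=1}^T ( λ̃‖∇f(x_t)‖² + (1-λ̃)‖m_t‖² ). -/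
/-!
The update direction `u = m - λ(m - ∇f x) = (1 - λ) m + λ ∇f x` is a convex combination, so
polarization gives `2⟪∇f x, u⟫ = ‖∇f x‖² - (1 - λ)‖m - ∇f x‖² + Q` with
`Q = λ‖∇f x‖² + (1 - λ)‖m‖²`, while convexity of `‖·‖²` gives `‖u‖² ≤ Q`. Plugging both into
the descent lemma `f (x - η u) ≤ f x - η⟪∇f x, u⟫ + Lη²/2 ‖u‖²` and using `Lη ≤ 1/2` yields a
one-step bound whose `f`-terms telescope when summed; `f ≥ f*` bounds the last one.
-/

open Finset InnerProductSpace

theorem le_add_fderiv_add_sq_of_lipschitz {E : Type*} [NormedAddCommGroup E] [NormedSpace ℝ E]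
    {f : E → ℝ} {f' : E → StrongDual ℝ E} {L : ℝ} (hf : ∀ x, HasFDerivAt f (f' x) x)
    (hL : ∀ x y, ‖f' x - f' y‖ ≤ L * ‖x - y‖) (x v : E) :
    f (x + v) ≤ f x + f' x v + L / 2 * ‖v‖ ^ 2 := by
  set φ : ℝ → ℝ := fun t => f (x + t • v) - t * f' x v - L / 2 * ‖v‖ ^ 2 * t ^ 2
  have hφ : ∀ t, HasDerivAt φ (f' (x + t • v) v - f' x v - L * ‖v‖ ^ 2 * t) t := by
    intro t
    have hline : HasDerivAt (fun s : ℝ => x + s • v) v t := by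
      simpa using ((hasDerivAt_id t).smul_const v).const_add x
    have := (((hf _).comp_hasDerivAt t hline).sub ((hasDerivAt_id t).mul_const (f' x v))).sub
      ((hasDerivAt_pow 2 t).const_mul (L / 2 * ‖v‖ ^ 2))
    refine this.congr_deriv ?_
    push_cast
    ring
  have hslope : ∀ t, 0 < t → f' (x + t • v) v - f' x v ≤ L * ‖v‖ ^ 2 * t := by
    intro t ht
    calc f' (x + t • v) v - f' x v = (f' (x + t • v) - f' x) v := rfl
      _ ≤ ‖f' (x + t • v) - f' x‖ * ‖v‖ :=
        (Real.le_norm_self _).trans (ContinuousLinearMap.le_opNorm _ _)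
      _ ≤ L * ‖t • v‖ * ‖v‖ :=
        mul_le_mul_of_nonneg_right (by simpa using hL (x + t • v) x) (norm_nonneg v)
      _ = L * ‖v‖ ^ 2 * t := by rw [norm_smul, Real.norm_of_nonneg ht.le]; ring
  have hanti : AntitoneOn φ (Set.Ici 0) :=
    antitoneOn_of_hasDerivWithinAt_nonpos (convex_Ici 0)
      (fun t _ => (hφ t).continuousAt.continuousWithinAt) (fun t _ => (hφ t).hasDerivWithinAt)
      (fun t ht => by rw [interior_Ici] at ht; linarith [hslope t ht])
  have h10 : φ 1 ≤ φ 0 := hanti Set.self_mem_Ici (Set.mem_Ici.2 zero_le_one) zero_le_one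
  simp only [φ, one_smul, zero_smul, add_zero, one_mul, one_pow, mul_one, zero_mul, sub_zero,
    ne_eq, OfNat.ofNat_ne_zero, not_false_eq_true, zero_pow, mul_zero] at h10
  linarith

section InnerProductSpace

variable {E : Type*} [NormedAddCommGroup E] [InnerProductSpace ℝ E]

theorem le_add_inner_gradient_add_sq_of_lipschitz [CompleteSpace E] {f : E → ℝ} {L : ℝ}
    (hf : Differentiable ℝ f) (hL : ∀ x y, ‖gradient f x - gradient f y‖ ≤ L * ‖x - y‖)
    (x v : E) :
    f (x + v) ≤ f x + ⟪gradient f x, v⟫_ℝ + L / 2 * ‖v‖ ^ 2 :=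
  le_add_fderiv_add_sq_of_lipschitz (fun x => (hf x).hasGradientAt)
    (fun x y => by rw [← map_sub, LinearIsometryEquiv.norm_map]; exact hL x y) x v

theorem two_mul_inner_sub_smul_sub (g m : E) (lam : ℝ) :
    2 * ⟪g, m - lam • (m - g)⟫_ℝ =
      ‖g‖ ^ 2 - (1 - lam) * ‖m - g‖ ^ 2 + (lam * ‖g‖ ^ 2 + (1 - lam) * ‖m‖ ^ 2) := by
  rw [inner_sub_right, inner_smul_right, inner_sub_right, real_inner_self_eq_norm_sq,
    norm_sub_sq_real, real_inner_comm]
  ring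

theorem norm_sub_smul_sub_sq (g m : E) (lam : ℝ) :
    ‖m - lam • (m - g)‖ ^ 2 =
      lam * ‖g‖ ^ 2 + (1 - lam) * ‖m‖ ^ 2 - lam * (1 - lam) * ‖m - g‖ ^ 2 := by
  rw [norm_sub_sq_real m (lam • (m - g)), inner_smul_right, norm_smul, mul_pow, Real.norm_eq_abs,
    sq_abs, inner_sub_right, real_inner_self_eq_norm_sq, norm_sub_sq_real m g]
  ring

theorem norm_sub_smul_sub_sq_le (g m : E) {lam : ℝ} (hlam0 : 0 ≤ lam) (hlam1 : lam ≤ 1) :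
    ‖m - lam • (m - g)‖ ^ 2 ≤ lam * ‖g‖ ^ 2 + (1 - lam) * ‖m‖ ^ 2 := by
  rw [norm_sub_smul_sub_sq]
  have : 0 ≤ lam * (1 - lam) * ‖m - g‖ ^ 2 := by
    have : 0 ≤ 1 - lam := by linarith
    positivity
  linarith

theorem uadam_step_descent [CompleteSpace E] {f : E → ℝ} {L lam η : ℝ}
    (hf : Differentiable ℝ f) (hL : ∀ x y, ‖gradient f x - gradient f y‖ ≤ L * ‖x - y‖)
    (hlam0 : 0 ≤ lam) (hlam1 : lam ≤ 1) (hη : 0 ≤ η) (hLη : L * η ≤ 1 / 2) (x m : E) :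
    η / 2 * ‖gradient f x‖ ^ 2 ≤
      f x - f (x - η • (m - lam • (m - gradient f x)))
        + (1 - lam) * η / 2 * ‖m - gradient f x‖ ^ 2
        - η / 4 * (lam * ‖gradient f x‖ ^ 2 + (1 - lam) * ‖m‖ ^ 2) := by
  set g := gradient f x with hg
  set u := m - lam • (m - g)
  have hdesc := le_add_inner_gradient_add_sq_of_lipschitz hf hL x (-(η • u))
  rw [← hg, ← sub_eq_add_neg, inner_neg_right, norm_neg, inner_smul_right, norm_smul,
    Real.norm_of_nonneg hη] at hdesc
  have hquad : L / 2 * (η * ‖u‖) ^ 2 ≤ η / 4 * (lam * ‖g‖ ^ 2 + (1 - lam) * ‖m‖ ^ 2) :=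
    calc L / 2 * (η * ‖u‖) ^ 2 = η / 2 * (L * η) * ‖u‖ ^ 2 := by ring
      _ ≤ η / 2 * (1 / 2) * ‖u‖ ^ 2 := by gcongr
      _ = η / 4 * ‖u‖ ^ 2 := by ring
      _ ≤ η / 4 * (lam * ‖g‖ ^ 2 + (1 - lam) * ‖m‖ ^ 2) :=
        mul_le_mul_of_nonneg_left (norm_sub_smul_sub_sq_le g m hlam0 hlam1) (by positivity)
  linear_combination hdesc + hquad - η / 2 * two_mul_inner_sub_smul_sub g m lam

end InnerProductSpace

theorem sum_Icc_le_of_le_sub_succ_add {a b c : ℕ → ℝ} {lb : ℝ} {m n : ℕ} (hmn : m ≤ n)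
    (hstep : ∀ t ∈ Icc m n, b t ≤ a t - a (t + 1) + c t) (hlb : lb ≤ a (n + 1)) :
    ∑ t ∈ Icc m n, b t ≤ a m - lb + ∑ t ∈ Icc m n, c t :=
  calc ∑ t ∈ Icc m n, b t ≤ ∑ t ∈ Icc m n, (a t - a (t + 1) + c t) := sum_le_sum hstep
    _ = a m - a (n + 1) + ∑ t ∈ Icc m n, c t := by
      rw [sum_add_distrib, ← neg_sub, ← sum_Icc_sub hmn, ← sum_neg_distrib]
      simp only [neg_sub]
    _ ≤ a m - lb + ∑ t ∈ Icc m n, c t := by linarith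

theorem uadam_deterministic_telescoping_general (d : ℕ) (f : EuclideanSpace ℝ (Fin d) → ℝ)
    (L fstar : ℝ) (hf : Differentiable ℝ f)
    (hL : ∀ x y : EuclideanSpace ℝ (Fin d), ‖gradient f x - gradient f y‖ ≤ L * ‖x - y‖)
    (hbdd : ∀ z, fstar ≤ f z)
    (lam η : ℝ) (hlam0 : 0 ≤ lam) (hlam1 : lam ≤ 1)
    (hη : 0 < η) (hLη : L * η ≤ 1 / 2)
    (x m : ℕ → EuclideanSpace ℝ (Fin d))
    (hx : ∀ t ≥ 1, x (t + 1) = x t - η • (m t - lam • (m t - gradient f (x t)))) :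
    ∀ T ≥ 1,
      η / 2 * ∑ t ∈ Finset.Icc 1 T, ‖gradient f (x t)‖ ^ 2 ≤
        f (x 1) - fstar
          + (1 - lam) * η / 2 * ∑ t ∈ Finset.Icc 1 T, ‖m t - gradient f (x t)‖ ^ 2
          - η / 4 * ∑ t ∈ Finset.Icc 1 T,
              (lam * ‖gradient f (x t)‖ ^ 2 + (1 - lam) * ‖m t‖ ^ 2) := by
  intro T hT
  have hstep : ∀ t ∈ Icc 1 T, η / 2 * ‖gradient f (x t)‖ ^ 2 ≤ f (x t) - f (x (t + 1)) +
      ((1 - lam) * η / 2 * ‖m t - gradient f (x t)‖ ^ 2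
        - η / 4 * (lam * ‖gradient f (x t)‖ ^ 2 + (1 - lam) * ‖m t‖ ^ 2)) := by
    intro t ht
    rw [hx t (mem_Icc.1 ht).1]
    linarith [uadam_step_descent hf hL hlam0 hlam1 hη.le hLη (x t) (m t)]
  have hsum := sum_Icc_le_of_le_sub_succ_add hT hstep (hbdd _)
  rwa [← mul_sum, sum_sub_distrib, ← mul_sum, ← mul_sum, ← add_sub_assoc] at hsum

theorem uadam_deterministic_telescoping (d : ℕ) (f : EuclideanSpace ℝ (Fin d) → ℝ)
    (L fstar : ℝ) (hf : Differentiable ℝ f)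
    (hL : ∀ x y : EuclideanSpace ℝ (Fin d), ‖gradient f x - gradient f y‖ ≤ L * ‖x - y‖)
    (hbdd : ∀ z, fstar ≤ f z)
    (β lam η : ℝ) (hβ0 : 0 ≤ β) (hβ1 : β < 1) (hlam0 : 0 ≤ lam) (hlam1 : lam ≤ 1)
    (hη : 0 < η) (hLη : L * η ≤ 1 / 2)
    (x m : ℕ → EuclideanSpace ℝ (Fin d)) (hm0 : m 0 = 0)
    (hm : ∀ t ≥ 1, m t = β • m (t - 1) + (1 - β) • gradient f (x t))
    (hx : ∀ t ≥ 1, x (t + 1) = x t - η • (m t - lam • (m t - gradient f (x t)))) :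
    ∀ T ≥ 1,
      η / 2 * ∑ t ∈ Finset.Icc 1 T, ‖gradient f (x t)‖ ^ 2 ≤
        f (x 1) - fstar
          + (1 - lam) * η / 2 * ∑ t ∈ Finset.Icc 1 T, ‖m t - gradient f (x t)‖ ^ 2
          - η / 4 * ∑ t ∈ Finset.Icc 1 T,
              (lam * ‖gradient f (x t)‖ ^ 2 + (1 - lam) * ‖m t‖ ^ 2) :=
  uadam_deterministic_telescoping_general d f L fstar hf hL hbdd lam η hlam0 hlam1 hη hLη x m hx
end
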